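/- arXiv:1604.08076 — 2 statements merged into one kernel-verified Lean document; each statement's English description precedes it below -/
import Mathlib

section
/- Let m₁ ≠ m₂ ∈ ℝ² and m₃ = m₁ + ρ(m₂ − m₁) with 0 < ρ < 1 (collinear receivers). Then the image of the range map 𝒯₃ equals σ ∩ Q₃. Moreover, for 𝒯 ∈ Im(𝒯₃), the fiber 𝒯₃⁻¹(𝒯) has exactly two elements if 𝒯 lies in the topological interior of Q₃ and exactly one element if 𝒯 lies in the topological boundary of Q₃. -/
/-!
With `d = ‖m₂ - m₁‖`, Stewart's theorem gives
`‖x - m₃‖² = (1 - ρ) ‖x - m₁‖² + ρ ‖x - m₂‖² - ρ (1 - ρ) d²`, so the third range is determined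
by the first two and the fiber over a point `(t₁, t₂, t₃)` of the quadric is the intersection of
the circles of radii `t₁`, `t₂` about `m₁`, `m₂`. That intersection lies on the line through the
common chord's midpoint perpendicular to `m₂ - m₁`, at squared distance
`(d² - (t₁ - t₂)²) ((t₁ + t₂)² - d²) / 4d²` from it, so it has two points or one according as this
quantity is positive or zero. On the quadric the inequalities of `Q₃` amount to
`|t₁ - t₂| ≤ d ≤ t₁ + t₂`, and the point is interior to `Q₃` exactly when that quantity is positive.
-/

open Module Metric
open scoped RealInnerProductSpace

section TwoCircles

variable {E : Type*} [NormedAddCommGroup E] [InnerProductSpace ℝ E]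

noncomputable def chordMidpoint (c₁ c₂ : E) (r₁ r₂ : ℝ) : E :=
  c₁ + ((r₁ ^ 2 - r₂ ^ 2 + ‖c₂ - c₁‖ ^ 2) / (2 * ‖c₂ - c₁‖ ^ 2)) • (c₂ - c₁)

noncomputable def halfChordSq (d r₁ r₂ : ℝ) : ℝ :=
  (d ^ 2 - (r₁ - r₂) ^ 2) * ((r₁ + r₂) ^ 2 - d ^ 2) / (4 * d ^ 2)

theorem mem_sphere_inter_sphere_iff {c₁ c₂ : E} (hc : c₁ ≠ c₂) {r₁ r₂ : ℝ} (hr₁ : 0 ≤ r₁)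
    (hr₂ : 0 ≤ r₂) {y : E} :
    y ∈ sphere c₁ r₁ ∩ sphere c₂ r₂ ↔
      ⟪y - chordMidpoint c₁ c₂ r₁ r₂, c₂ - c₁⟫ = 0 ∧
        ‖y - chordMidpoint c₁ c₂ r₁ r₂‖ ^ 2 = halfChordSq ‖c₂ - c₁‖ r₁ r₂ := by
  set u := c₂ - c₁
  set k := (r₁ ^ 2 - r₂ ^ 2 + ‖u‖ ^ 2) / (2 * ‖u‖ ^ 2) with hk_def
  set w := y - chordMidpoint c₁ c₂ r₁ r₂
  have hu : ‖u‖ ≠ 0 := norm_ne_zero_iff.2 (sub_ne_zero.2 hc.symm)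
  have hk : 2 * ‖u‖ ^ 2 * k = r₁ ^ 2 - r₂ ^ 2 + ‖u‖ ^ 2 := by rw [hk_def]; field_simp
  have hh : halfChordSq ‖u‖ r₁ r₂ = r₁ ^ 2 - k ^ 2 * ‖u‖ ^ 2 := by
    rw [halfChordSq, hk_def]; field_simp; ring
  have norm_sq (s : ℝ) : ‖s • u + w‖ ^ 2 = s ^ 2 * ‖u‖ ^ 2 + 2 * s * ⟪w, u⟫ + ‖w‖ ^ 2 := by
    rw [norm_add_sq_real, norm_smul, inner_smul_left, real_inner_comm, Real.norm_eq_abs,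
      mul_pow, sq_abs]
    simp only [RCLike.conj_to_real]; ring
  have h₁ : y - c₁ = k • u + w := by simp only [w, chordMidpoint, u]; abel
  have h₂ : y - c₂ = (k - 1) • u + w := by simp only [w, chordMidpoint, u, sub_smul, one_smul]; abel
  rw [Set.mem_inter_iff, mem_sphere_iff_norm, mem_sphere_iff_norm, ← sq_eq_sq₀ (norm_nonneg _) hr₁,
    ← sq_eq_sq₀ (norm_nonneg _) hr₂, h₁, h₂, norm_sq, norm_sq, hh]
  constructor
  · rintro ⟨e₁, e₂⟩
    have hwu : ⟪w, u⟫ = 0 := by linear_combination (e₁ - e₂ - hk) / 2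
    exact ⟨hwu, by linear_combination e₁ - 2 * k * hwu⟩
  · rintro ⟨hwu, hw⟩
    exact ⟨by linear_combination hw + 2 * k * hwu,
      by linear_combination hw + 2 * (k - 1) * hwu - hk⟩

theorem sphere_inter_sphere_eq_singleton {c₁ c₂ : E} (hc : c₁ ≠ c₂) {r₁ r₂ : ℝ} (hr₁ : 0 ≤ r₁)
    (hr₂ : 0 ≤ r₂) (h : halfChordSq ‖c₂ - c₁‖ r₁ r₂ = 0) :
    sphere c₁ r₁ ∩ sphere c₂ r₂ = {chordMidpoint c₁ c₂ r₁ r₂} := by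
  ext y
  rw [mem_sphere_inter_sphere_iff hc hr₁ hr₂, h, Set.mem_singleton_iff, sq_eq_zero_iff,
    norm_eq_zero, sub_eq_zero]
  constructor
  · exact And.right
  · rintro rfl
    simp

theorem exists_inner_eq_zero_norm_eq [FiniteDimensional ℝ E] (hE : 1 < finrank ℝ E) (u : E)
    {t : ℝ} (ht : 0 ≤ t) : ∃ v : E, ⟪v, u⟫ = 0 ∧ ‖v‖ = t := by
  have hK : (ℝ ∙ u)ᗮ ≠ ⊥ := by
    intro hbot
    have := (ℝ ∙ u).finrank_add_finrank_orthogonal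
    rw [hbot, finrank_bot, add_zero] at this
    have := finrank_span_le_card (R := ℝ) ({u} : Set E)
    simp only [Set.toFinset_singleton, Finset.card_singleton] at this
    omega
  obtain ⟨w, hwK, hw⟩ := Submodule.exists_mem_ne_zero_of_ne_bot hK
  refine ⟨(t / ‖w‖) • w, ?_, ?_⟩
  · rw [inner_smul_left, real_inner_comm,
      Submodule.mem_orthogonal_singleton_iff_inner_right.1 hwK, mul_zero]
  · rw [norm_smul, Real.norm_eq_abs, abs_div, abs_of_nonneg ht, abs_norm,
      div_mul_cancel₀ _ (norm_ne_zero_iff.2 hw)]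

theorem ncard_sphere_inter_sphere_of_eq_zero {c₁ c₂ : E} (hc : c₁ ≠ c₂) {r₁ r₂ : ℝ}
    (hr₁ : 0 ≤ r₁) (hr₂ : 0 ≤ r₂) (h : halfChordSq ‖c₂ - c₁‖ r₁ r₂ = 0) :
    (sphere c₁ r₁ ∩ sphere c₂ r₂).ncard = 1 := by
  rw [sphere_inter_sphere_eq_singleton hc hr₁ hr₂ h, Set.ncard_singleton]

variable [FiniteDimensional ℝ E]

theorem exists_sphere_inter_sphere_eq_pair (hE : finrank ℝ E = 2) {c₁ c₂ : E} (hc : c₁ ≠ c₂)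
    {r₁ r₂ : ℝ} (hr₁ : 0 ≤ r₁) (hr₂ : 0 ≤ r₂) (h : 0 < halfChordSq ‖c₂ - c₁‖ r₁ r₂) :
    ∃ p q, p ≠ q ∧ sphere c₁ r₁ ∩ sphere c₂ r₂ = {p, q} := by
  obtain ⟨v, hvu, hv⟩ := exists_inner_eq_zero_norm_eq (by omega) (c₂ - c₁) (Real.sqrt_nonneg
    (halfChordSq ‖c₂ - c₁‖ r₁ r₂))
  have hv₀ : v ≠ 0 := norm_pos_iff.1 (hv ▸ Real.sqrt_pos.2 h)
  set m := chordMidpoint c₁ c₂ r₁ r₂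
  have hmem : ∀ w, ⟪w, c₂ - c₁⟫ = 0 → ‖w‖ = ‖v‖ → m + w ∈ sphere c₁ r₁ ∩ sphere c₂ r₂ := by
    intro w hw hwv
    rw [mem_sphere_inter_sphere_iff hc hr₁ hr₂, add_sub_cancel_left, hwv, hv,
      Real.sq_sqrt h.le]
    exact ⟨hw, rfl⟩
  have hp := hmem v hvu rfl
  have hq := hmem (-v) (by rw [inner_neg_left, hvu, neg_zero]) (norm_neg v)
  have hpq : m + v ≠ m + -v := by
    rw [ne_eq, add_right_inj, eq_neg_iff_add_eq_zero, ← two_smul ℝ, smul_eq_zero]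
    simpa using hv₀
  refine ⟨m + v, m + -v, hpq, ?_⟩
  refine Set.Subset.antisymm (fun y hy => ?_) (Set.insert_subset hp (Set.singleton_subset_iff.2 hq))
  simp only [Set.mem_inter_iff, mem_sphere] at hp hq hy
  exact EuclideanGeometry.eq_of_dist_eq_of_dist_eq_of_finrank_eq_two hE hc
    hpq hp.1 hq.1 hy.1 hp.2 hq.2 hy.2

theorem ncard_sphere_inter_sphere_of_pos (hE : finrank ℝ E = 2) {c₁ c₂ : E} (hc : c₁ ≠ c₂)
    {r₁ r₂ : ℝ} (hr₁ : 0 ≤ r₁) (hr₂ : 0 ≤ r₂) (h : 0 < halfChordSq ‖c₂ - c₁‖ r₁ r₂) :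
    (sphere c₁ r₁ ∩ sphere c₂ r₂).ncard = 2 := by
  obtain ⟨p, q, hpq, hS⟩ := exists_sphere_inter_sphere_eq_pair hE hc hr₁ hr₂ h
  rw [hS, Set.ncard_pair hpq]

theorem sphere_inter_sphere_nonempty (hE : finrank ℝ E = 2) {c₁ c₂ : E} (hc : c₁ ≠ c₂)
    {r₁ r₂ : ℝ} (hr₁ : 0 ≤ r₁) (hr₂ : 0 ≤ r₂) (h : 0 ≤ halfChordSq ‖c₂ - c₁‖ r₁ r₂) :
    (sphere c₁ r₁ ∩ sphere c₂ r₂).Nonempty := by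
  refine Set.nonempty_of_ncard_ne_zero ?_
  rcases h.lt_or_eq with h | h
  · rw [ncard_sphere_inter_sphere_of_pos hE hc hr₁ hr₂ h]; norm_num
  · rw [ncard_sphere_inter_sphere_of_eq_zero hc hr₁ hr₂ h.symm]; norm_num

end TwoCircles

section RangeMap

variable {E : Type*} [NormedAddCommGroup E] [InnerProductSpace ℝ E]

def rangeMap (m₁ m₂ : E) (ρ : ℝ) (x : E) : ℝ × ℝ × ℝ :=
  (‖x - m₁‖, ‖x - m₂‖, ‖x - (m₁ + ρ • (m₂ - m₁))‖)

def rangeQuadric (ρ d : ℝ) : Set (ℝ × ℝ × ℝ) :=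
  {T | T.2.2 ^ 2 = (1 - ρ) * T.1 ^ 2 + ρ * T.2.1 ^ 2 - ρ * (1 - ρ) * d ^ 2}

def rangePolyhedron (ρ d : ℝ) : Set (ℝ × ℝ × ℝ) :=
  {T | T.1 - T.2.2 ≤ ρ * d ∧ T.2.1 - T.2.2 ≤ (1 - ρ) * d ∧ d ≤ T.1 + T.2.1 ∧
    0 ≤ (1 - ρ) * d * T.1 + ρ * d * T.2.1 - d * T.2.2}

theorem norm_sub_add_smul_sub_sq (x m₁ m₂ : E) (ρ : ℝ) :
    ‖x - (m₁ + ρ • (m₂ - m₁))‖ ^ 2 =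
      (1 - ρ) * ‖x - m₁‖ ^ 2 + ρ * ‖x - m₂‖ ^ 2 - ρ * (1 - ρ) * ‖m₂ - m₁‖ ^ 2 := by
  have e₃ : x - (m₁ + ρ • (m₂ - m₁)) = (x - m₁) - ρ • (m₂ - m₁) := by abel
  have e₂ : x - m₂ = (x - m₁) - (m₂ - m₁) := by abel
  rw [e₃, e₂, norm_sub_sq_real _ (ρ • _), norm_sub_sq_real (x - m₁) (m₂ - m₁), norm_smul,
    inner_smul_right, Real.norm_eq_abs, mul_pow, sq_abs]
  ring

theorem rangeMap_mem {ρ : ℝ} (hρ₀ : 0 ≤ ρ) (hρ₁ : ρ ≤ 1) (m₁ m₂ x : E) :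
    rangeMap m₁ m₂ ρ x ∈ rangeQuadric ρ ‖m₂ - m₁‖ ∩ rangePolyhedron ρ ‖m₂ - m₁‖ := by
  set m₃ := m₁ + ρ • (m₂ - m₁)
  have h₃₁ : ‖m₃ - m₁‖ = ρ * ‖m₂ - m₁‖ := by
    rw [add_sub_cancel_left, norm_smul, Real.norm_eq_abs, abs_of_nonneg hρ₀]
  have h₃₂ : ‖m₃ - m₂‖ = (1 - ρ) * ‖m₂ - m₁‖ := by
    rw [show m₃ - m₂ = (1 - ρ) • (m₁ - m₂) by simp only [m₃]; module, norm_smul,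
      Real.norm_eq_abs, abs_of_nonneg (by linarith), norm_sub_rev]
  have hconv : ‖x - m₃‖ ≤ (1 - ρ) * ‖x - m₁‖ + ρ * ‖x - m₂‖ := by
    rw [show x - m₃ = (1 - ρ) • (x - m₁) + ρ • (x - m₂) by simp only [m₃]; module]
    refine (norm_add_le _ _).trans_eq ?_
    rw [norm_smul, norm_smul, Real.norm_eq_abs, Real.norm_eq_abs, abs_of_nonneg hρ₀,
      abs_of_nonneg (by linarith)]
  refine ⟨norm_sub_add_smul_sub_sq x m₁ m₂ ρ, ?_, ?_, ?_, ?_⟩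
  · have := norm_sub_norm_le (x - m₁) (x - m₃)
    rw [sub_sub_sub_cancel_left, h₃₁] at this
    exact this
  · have := norm_sub_norm_le (x - m₂) (x - m₃)
    rw [sub_sub_sub_cancel_left, h₃₂] at this
    exact this
  · have := norm_sub_le (x - m₁) (x - m₂)
    rwa [sub_sub_sub_cancel_left] at this
  · show 0 ≤ (1 - ρ) * ‖m₂ - m₁‖ * ‖x - m₁‖ + ρ * ‖m₂ - m₁‖ * ‖x - m₂‖ - ‖m₂ - m₁‖ * ‖x - m₃‖
    nlinarith [norm_nonneg (m₂ - m₁)]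

theorem preimage_rangeMap_singleton (m₁ m₂ : E) {ρ : ℝ} {T : ℝ × ℝ × ℝ}
    (hT : T ∈ rangeQuadric ρ ‖m₂ - m₁‖) (hT₃ : 0 ≤ T.2.2) :
    rangeMap m₁ m₂ ρ ⁻¹' {T} = sphere m₁ T.1 ∩ sphere m₂ T.2.1 := by
  obtain ⟨t₁, t₂, t₃⟩ := T
  ext x
  simp only [Set.mem_preimage, Set.mem_singleton_iff, rangeMap, Prod.mk.injEq, Set.mem_inter_iff,
    mem_sphere_iff_norm]
  refine ⟨fun h => ⟨h.1, h.2.1⟩, fun ⟨h₁, h₂⟩ => ⟨h₁, h₂, ?_⟩⟩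
  rw [← sq_eq_sq₀ (norm_nonneg _) hT₃, norm_sub_add_smul_sub_sq, h₁, h₂]
  exact hT.symm

end RangeMap

section Polyhedron

open Filter Topology

variable {ρ d : ℝ}

theorem lt_add_and_lt_of_mem_interior (hd : 0 < d) {T : ℝ × ℝ × ℝ}
    (hT : T ∈ interior (rangePolyhedron ρ d)) :
    d < T.1 + T.2.1 ∧ T.2.2 < (1 - ρ) * T.1 + ρ * T.2.1 := by
  have hcont : Continuous fun ε : ℝ => (T.1 - ε, T.2.1 - ε, T.2.2 + ε) := by fun_prop
  have hev : ∀ᶠ ε in 𝓝[>] (0 : ℝ), (T.1 - ε, T.2.1 - ε, T.2.2 + ε) ∈ rangePolyhedron ρ d :=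
    nhdsWithin_le_nhds (hcont.tendsto' 0 T (by simp) (mem_interior_iff_mem_nhds.1 hT))
  -- pushing `T` along `(-1, -1, 1)` costs the last two constraints `2ε` and `2dε`
  obtain ⟨ε, hε : 0 < ε, -, -, h₃, h₄⟩ := (eventually_mem_nhdsWithin.and hev).exists
  dsimp only at h₃ h₄
  exact ⟨by linarith, by nlinarith⟩

theorem sq_sub_le_and_le_add_of_mem_inter (hd : 0 < d) (hρ₀ : 0 < ρ) (hρ₁ : ρ < 1)
    {T : ℝ × ℝ × ℝ} (hT : T ∈ rangeQuadric ρ d ∩ rangePolyhedron ρ d) :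
    (T.1 - T.2.1) ^ 2 ≤ d ^ 2 ∧ d ≤ T.1 + T.2.1 := by
  obtain ⟨t₁, t₂, t₃⟩ := T
  obtain ⟨hσ, h₁, h₂, h₃, h₄⟩ := hT
  have ht₃ : 0 ≤ t₃ := by linarith
  have hmean : t₃ ≤ (1 - ρ) * t₁ + ρ * t₂ := by nlinarith
  refine ⟨?_, h₃⟩
  -- on the quadric, `t₃² - ((1 - ρ) t₁ + ρ t₂)² = ρ (1 - ρ) ((t₁ - t₂)² - d²)`
  nlinarith [mul_pos hρ₀ (sub_pos.2 hρ₁), mul_le_mul hmean hmean ht₃ (ht₃.trans hmean)]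

theorem nonneg_of_mem_inter (hd : 0 < d) (hρ₀ : 0 < ρ) (hρ₁ : ρ < 1) {T : ℝ × ℝ × ℝ}
    (hT : T ∈ rangeQuadric ρ d ∩ rangePolyhedron ρ d) : 0 ≤ T.1 ∧ 0 ≤ T.2.1 ∧ 0 ≤ T.2.2 := by
  obtain ⟨hsub, hadd⟩ := sq_sub_le_and_le_add_of_mem_inter hd hρ₀ hρ₁ hT
  obtain ⟨hlo, hhi⟩ := abs_le_of_sq_le_sq' hsub hd.le
  exact ⟨by linarith, by linarith, by linarith [hT.2.1, hT.2.2.1]⟩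

theorem halfChordSq_nonneg_of_mem_inter (hd : 0 < d) (hρ₀ : 0 < ρ) (hρ₁ : ρ < 1)
    {T : ℝ × ℝ × ℝ} (hT : T ∈ rangeQuadric ρ d ∩ rangePolyhedron ρ d) :
    0 ≤ halfChordSq d T.1 T.2.1 := by
  obtain ⟨hsub, hadd⟩ := sq_sub_le_and_le_add_of_mem_inter hd hρ₀ hρ₁ hT
  have hadd' : d ^ 2 ≤ (T.1 + T.2.1) ^ 2 := pow_le_pow_left₀ hd.le hadd 2
  exact div_nonneg (mul_nonneg (by linarith) (by linarith)) (by positivity)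

theorem mem_interior_rangePolyhedron_iff (hd : 0 < d) (hρ₀ : 0 < ρ) (hρ₁ : ρ < 1)
    {T : ℝ × ℝ × ℝ} (hT : T ∈ rangeQuadric ρ d ∩ rangePolyhedron ρ d) :
    T ∈ interior (rangePolyhedron ρ d) ↔ 0 < halfChordSq d T.1 T.2.1 := by
  obtain ⟨hsub, hadd⟩ := sq_sub_le_and_le_add_of_mem_inter hd hρ₀ hρ₁ hT
  obtain ⟨ht₁, ht₂, ht₃⟩ := nonneg_of_mem_inter hd hρ₀ hρ₁ hT
  have hρ : 0 < ρ * (1 - ρ) := mul_pos hρ₀ (sub_pos.2 hρ₁)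
  rw [halfChordSq, div_pos_iff_of_pos_right (by positivity)]
  constructor
  · intro hT'
    obtain ⟨hadd', hmean⟩ := lt_add_and_lt_of_mem_interior hd hT'
    obtain ⟨t₁, t₂, t₃⟩ := T
    have hσ : t₃ ^ 2 = _ := hT.1
    dsimp only at *
    refine mul_pos ?_ ?_
    · nlinarith [mul_lt_mul'' hmean hmean ht₃ ht₃]
    · nlinarith
  · intro hpos
    obtain ⟨t₁, t₂, t₃⟩ := T
    have hσ : t₃ ^ 2 = _ := hT.1
    dsimp only at *
    have hf₁ : 0 < d ^ 2 - (t₁ - t₂) ^ 2 := by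
      refine (sub_nonneg.2 hsub).lt_of_ne fun h => ?_
      rw [← h, zero_mul] at hpos
      exact hpos.false
    have hf₂ : 0 < (t₁ + t₂) ^ 2 - d ^ 2 := by
      refine (sub_nonneg.2 (pow_le_pow_left₀ hd.le hadd 2)).lt_of_ne fun h => ?_
      rw [← h, mul_zero] at hpos
      exact hpos.false
    obtain ⟨hlo, hhi⟩ := abs_lt_of_sq_lt_sq' (sub_pos.1 hf₁) hd.le
    have hadd' : d < t₁ + t₂ := lt_of_pow_lt_pow_left₀ 2 (by linarith) (sub_pos.1 hf₂)
    have hopen : IsOpen {S : ℝ × ℝ × ℝ | S.1 - S.2.2 < ρ * d ∧ S.2.1 - S.2.2 < (1 - ρ) * d ∧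
        d < S.1 + S.2.1 ∧ 0 < (1 - ρ) * d * S.1 + ρ * d * S.2.1 - d * S.2.2} :=
      (isOpen_lt (by fun_prop) (by fun_prop)).and <| (isOpen_lt (by fun_prop) (by fun_prop)).and <|
        (isOpen_lt (by fun_prop) (by fun_prop)).and (isOpen_lt (by fun_prop) (by fun_prop))
    refine interior_maximal ?_ hopen ⟨?_, ?_, hadd', ?_⟩
    · exact fun S hS => ⟨hS.1.le, hS.2.1.le, hS.2.2.1.le, hS.2.2.2.le⟩
    -- on the quadric, `t₃² - (t₁ - ρ d)² = ρ (t₂ - t₁ + d) (t₁ + t₂ - d)`, and symmetrically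
    · nlinarith [mul_pos hρ₀ (mul_pos (by linarith : 0 < t₂ - t₁ + d) (sub_pos.2 hadd'))]
    · nlinarith [mul_pos (sub_pos.2 hρ₁)
        (mul_pos (by linarith : 0 < t₁ - t₂ + d) (sub_pos.2 hadd'))]
    · have hmean : t₃ < (1 - ρ) * t₁ + ρ * t₂ :=
        lt_of_pow_lt_pow_left₀ 2 (by nlinarith) (by nlinarith)
      show 0 < (1 - ρ) * d * t₁ + ρ * d * t₂ - d * t₃
      nlinarith [mul_pos hd (sub_pos.2 hmean)]

end Polyhedron

/-- with collinear receivers (m₃ strictly between m₁ and m₂), the image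
of the range map 𝒯₃ equals σ ∩ Q₃, and the fibers have two elements over the interior
of Q₃ and one element over its boundary. -/
theorem stmt14 (m₁ m₂ : EuclideanSpace ℝ (Fin 2)) (hm : m₁ ≠ m₂) (ρ : ℝ)
    (hρ1 : 0 < ρ) (hρ2 : ρ < 1)
    (m₃ : EuclideanSpace ℝ (Fin 2)) (hm₃ : m₃ = m₁ + ρ • (m₂ - m₁))
    (T3 : EuclideanSpace ℝ (Fin 2) → ℝ × ℝ × ℝ)
    (hT3 : ∀ x, T3 x = (‖x - m₁‖, ‖x - m₂‖, ‖x - m₃‖))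
    (Q3 : Set (ℝ × ℝ × ℝ))
    (hQ3 : Q3 = {T : ℝ × ℝ × ℝ |
      T.1 - T.2.2 ≤ ρ * ‖m₂ - m₁‖ ∧ T.2.1 - T.2.2 ≤ (1 - ρ) * ‖m₂ - m₁‖ ∧
      ‖m₂ - m₁‖ ≤ T.1 + T.2.1 ∧
      0 ≤ (1 - ρ) * ‖m₂ - m₁‖ * T.1 + ρ * ‖m₂ - m₁‖ * T.2.1 - ‖m₂ - m₁‖ * T.2.2})
    (σ : Set (ℝ × ℝ × ℝ))
    (hσ : σ = {T : ℝ × ℝ × ℝ |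
      T.2.2 ^ 2 = (1 - ρ) * T.1 ^ 2 + ρ * T.2.1 ^ 2 - ρ * (1 - ρ) * ‖m₂ - m₁‖ ^ 2}) :
    Set.range T3 = σ ∩ Q3 ∧
    ∀ T ∈ Set.range T3,
      (T ∈ interior Q3 → (T3 ⁻¹' {T}).ncard = 2) ∧
      (T ∈ frontier Q3 → (T3 ⁻¹' {T}).ncard = 1) := by
  obtain rfl : T3 = rangeMap m₁ m₂ ρ := funext fun x => by rw [hT3, hm₃]; rfl
  replace hQ3 : Q3 = rangePolyhedron ρ ‖m₂ - m₁‖ := hQ3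
  replace hσ : σ = rangeQuadric ρ ‖m₂ - m₁‖ := hσ
  subst hQ3 hσ
  have hd : 0 < ‖m₂ - m₁‖ := norm_pos_iff.2 (sub_ne_zero.2 hm.symm)
  have hE : finrank ℝ (EuclideanSpace ℝ (Fin 2)) = 2 := finrank_euclideanSpace_fin
  have hfiber : ∀ T ∈ rangeQuadric ρ ‖m₂ - m₁‖ ∩ rangePolyhedron ρ ‖m₂ - m₁‖,
      rangeMap m₁ m₂ ρ ⁻¹' {T} = sphere m₁ T.1 ∩ sphere m₂ T.2.1 := fun T hT =>
    preimage_rangeMap_singleton m₁ m₂ hT.1 (nonneg_of_mem_inter hd hρ1 hρ2 hT).2.2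
  have hrange : Set.range (rangeMap m₁ m₂ ρ) =
      rangeQuadric ρ ‖m₂ - m₁‖ ∩ rangePolyhedron ρ ‖m₂ - m₁‖ := by
    refine (Set.range_subset_iff.2 (rangeMap_mem hρ1.le hρ2.le m₁ m₂)).antisymm fun T hT => ?_
    obtain ⟨ht₁, ht₂, -⟩ := nonneg_of_mem_inter hd hρ1 hρ2 hT
    obtain ⟨x, hx⟩ := sphere_inter_sphere_nonempty hE hm ht₁ ht₂
      (halfChordSq_nonneg_of_mem_inter hd hρ1 hρ2 hT)
    rw [← hfiber T hT] at hx
    exact ⟨x, hx⟩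
  refine ⟨hrange, fun T hT => ?_⟩
  rw [hrange] at hT
  obtain ⟨ht₁, ht₂, -⟩ := nonneg_of_mem_inter hd hρ1 hρ2 hT
  rw [hfiber T hT, mem_interior_rangePolyhedron_iff hd hρ1 hρ2 hT]
  refine ⟨ncard_sphere_inter_sphere_of_pos hE hm ht₁ ht₂, fun hfr => ?_⟩
  refine ncard_sphere_inter_sphere_of_eq_zero hm ht₁ ht₂ ?_
  have hnpos := (mem_interior_rangePolyhedron_iff hd hρ1 hρ2 hT).not.1 hfr.2
  exact le_antisymm (not_lt.1 hnpos) (halfChordSq_nonneg_of_mem_inter hd hρ1 hρ2 hT)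
end

section
/- The map 𝒯_{3,2} is differentiable on D = ℝ³ ∖ {m₁, m₂}, and its derivative at x ∈ D is represented by the 2×3 matrix whose i-th row is the unit vector (x − m_i)/d_i(x). For x ∈ D, this matrix has rank 1 if x lies on the line through m₁ and m₂, and rank 2 otherwise. -/
/-!
Away from `a`, `z ↦ ‖z - a‖` is the square root of the smooth function `‖z - a‖²`, so its
gradient at `x` is the unit vector `(x - a) / ‖x - a‖`; this gives the Jacobian row by row.
Rescaling rows by nonzero scalars does not change the row space, so the rank of the Jacobian is
the dimension of `span {x - m₀, x - m₁} = vectorSpan {m₀, m₁, x}`. That dimension is positive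
because `x ≠ m₀`, at most the number of rows, and at most `1` exactly when the three points are
collinear.
-/

open Module Submodule

theorem hasStrictFDerivAt_norm_of_ne_zero {F : Type*} [NormedAddCommGroup F]
    [InnerProductSpace ℝ F] {x : F} (hx : x ≠ 0) :
    HasStrictFDerivAt (‖·‖) (‖x‖⁻¹ • innerSL ℝ x) x := by
  have hsq := (hasStrictFDerivAt_norm_sq x).sqrt (pow_ne_zero 2 (norm_ne_zero_iff.2 hx))
  simp only [Real.sqrt_sq (norm_nonneg _)] at hsq
  convert hsq using 1
  rw [← ofNat_smul_eq_nsmul ℝ, smul_smul]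
  congr 1
  field_simp

theorem Submodule.span_range_smul_of_ne_zero {K V ι : Type*} [Field K] [AddCommGroup V]
    [Module K V] {c : ι → K} (hc : ∀ i, c i ≠ 0) (v : ι → V) :
    span K (Set.range fun i => c i • v i) = span K (Set.range v) := by
  refine le_antisymm (span_le.2 ?_) (span_le.2 ?_) <;> rintro _ ⟨i, rfl⟩
  · exact smul_mem _ _ (subset_span ⟨i, rfl⟩)
  · have hi : c i • v i ∈ span K (Set.range fun i => c i • v i) := subset_span ⟨i, rfl⟩
    simpa [smul_smul, hc i] using smul_mem _ (c i)⁻¹ hi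

theorem vectorSpan_insert_eq_span_range_vsub {k V P ι : Type*} [Ring k] [AddCommGroup V]
    [Module k V] [AddTorsor V P] (x : P) (p : ι → P) :
    vectorSpan k (insert x (Set.range p)) = span k (Set.range fun i => x -ᵥ p i) := by
  rw [vectorSpan_eq_span_vsub_set_left k (Set.mem_insert x _), Set.image_insert_eq, vsub_self,
    span_insert_zero, ← Set.range_comp]
  rfl

theorem hasFDerivAt_of_apply_eq_norm_sub {ι n : Type*} [Fintype ι] [Fintype n] [DecidableEq n]
    {m : ι → EuclideanSpace ℝ n} {T : EuclideanSpace ℝ n → EuclideanSpace ℝ ι}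
    (hT : ∀ z i, T z i = ‖z - m i‖) {x : EuclideanSpace ℝ n} (hx : ∀ i, x ≠ m i)
    {A : Matrix ι n ℝ} (hA : ∀ i l, A i l = (x l - m i l) / ‖x - m i‖) :
    HasFDerivAt T (Matrix.toEuclideanLin A).toContinuousLinearMap x := by
  rw [← hasFDerivWithinAt_univ, hasFDerivWithinAt_euclidean]
  intro i
  have hnorm := (hasStrictFDerivAt_norm_of_ne_zero (sub_ne_zero.2 (hx i))).hasFDerivAt
  have hdist : HasFDerivAt (fun z => ‖z - m i‖) (‖x - m i‖⁻¹ • innerSL ℝ (x - m i)) x := by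
    simpa only [Function.comp_def, id_eq, ContinuousLinearMap.comp_id] using
      hnorm.comp x ((hasFDerivAt_id x).sub_const (m i))
  simp only [funext (hT · i)]
  refine (hdist.congr_fderiv ?_).hasFDerivWithinAt
  ext v
  simp only [ContinuousLinearMap.comp_apply, LinearMap.coe_toContinuousLinearMap',
    PiLp.proj_apply, Matrix.ofLp_toLpLin, Matrix.toLin'_apply, Matrix.mulVec, dotProduct,
    FunLike.coe_smul, Pi.smul_apply, coe_innerSL_apply, PiLp.inner_apply,
    RCLike.inner_apply, conj_trivial, PiLp.sub_apply, smul_eq_mul, Finset.mul_sum]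
  refine Finset.sum_congr rfl fun l _ => ?_
  rw [hA]
  ring

theorem rank_eq_finrank_vectorSpan_insert {ι n : Type*} [Fintype ι] [Fintype n]
    {m : ι → EuclideanSpace ℝ n} {x : EuclideanSpace ℝ n} (hx : ∀ i, x ≠ m i)
    {A : Matrix ι n ℝ} (hA : ∀ i l, A i l = (x l - m i l) / ‖x - m i‖) :
    A.rank = finrank ℝ (vectorSpan ℝ (insert x (Set.range m))) := by
  have hrow : A.row = fun i => ‖x - m i‖⁻¹ • WithLp.ofLp (x - m i) := by
    ext i l
    simp [hA, div_eq_inv_mul]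
  rw [Matrix.rank_eq_finrank_span_row, hrow,
    span_range_smul_of_ne_zero (fun i => inv_ne_zero (norm_ne_zero_iff.2 (sub_ne_zero.2 (hx i)))),
    vectorSpan_insert_eq_span_range_vsub, ← LinearEquiv.finrank_map_eq (WithLp.linearEquiv 2 ℝ _),
    map_span, ← Set.range_comp]
  rfl

theorem stmt16_general (m : Fin 2 → EuclideanSpace ℝ (Fin 3))
    (J : EuclideanSpace ℝ (Fin 3) → Matrix (Fin 2) (Fin 3) ℝ)
    (hJ : ∀ x i l, J x i l = (x l - m i l) / ‖x - m i‖)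
    (T : EuclideanSpace ℝ (Fin 3) → EuclideanSpace ℝ (Fin 2))
    (hT : ∀ x i, T x i = ‖x - m i‖) :
    (∀ x : EuclideanSpace ℝ (Fin 3), (∀ i, x ≠ m i) →
      HasFDerivAt T (LinearMap.toContinuousLinearMap (Matrix.toEuclideanLin (J x))) x) ∧
    (∀ x : EuclideanSpace ℝ (Fin 3), (∀ i, x ≠ m i) →
      ((Collinear ℝ ({m 0, m 1, x} : Set (EuclideanSpace ℝ (Fin 3))) → (J x).rank = 1) ∧
       (¬ Collinear ℝ ({m 0, m 1, x} : Set (EuclideanSpace ℝ (Fin 3))) → (J x).rank = 2))) := by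
  refine ⟨fun x hx => hasFDerivAt_of_apply_eq_norm_sub hT hx (hJ x), fun x hx => ?_⟩
  have hset : ({m 0, m 1, x} : Set (EuclideanSpace ℝ (Fin 3))) = insert x (Set.range m) := by
    ext y
    simp only [Set.mem_insert_iff, Set.mem_singleton_iff, Set.mem_range, Fin.exists_fin_two]
    tauto
  have hrank : (J x).rank = finrank ℝ (vectorSpan ℝ ({m 0, m 1, x} : Set _)) := by
    rw [hset]; exact rank_eq_finrank_vectorSpan_insert hx (hJ x)
  have hpos : (J x).rank ≠ 0 := by
    rw [hrank, Ne, Submodule.finrank_eq_zero, vectorSpan_eq_bot_iff_subsingleton]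
    exact fun h => hx 0 (h (by simp) (by simp))
  have hle : (J x).rank ≤ 2 := by simpa using (J x).rank_le_card_height
  rw [collinear_iff_finrank_le_one, ← hrank]
  omega

/-- 𝒯_{3,2} is differentiable on ℝ³ ∖ {m₁, m₂} with Jacobian whose i-th
row is (x − mᵢ)/dᵢ(x); the Jacobian has rank 1 on the line through m₁, m₂ and rank 2
elsewhere. -/
theorem stmt16 (m : Fin 2 → EuclideanSpace ℝ (Fin 3)) (hm : Function.Injective m)
    (J : EuclideanSpace ℝ (Fin 3) → Matrix (Fin 2) (Fin 3) ℝ)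
    (hJ : ∀ x i l, J x i l = (x l - m i l) / ‖x - m i‖)
    (T : EuclideanSpace ℝ (Fin 3) → EuclideanSpace ℝ (Fin 2))
    (hT : ∀ x i, T x i = ‖x - m i‖) :
    (∀ x : EuclideanSpace ℝ (Fin 3), (∀ i, x ≠ m i) →
      HasFDerivAt T (LinearMap.toContinuousLinearMap (Matrix.toEuclideanLin (J x))) x) ∧
    (∀ x : EuclideanSpace ℝ (Fin 3), (∀ i, x ≠ m i) →
      ((Collinear ℝ ({m 0, m 1, x} : Set (EuclideanSpace ℝ (Fin 3))) → (J x).rank = 1) ∧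
       (¬ Collinear ℝ ({m 0, m 1, x} : Set (EuclideanSpace ℝ (Fin 3))) → (J x).rank = 2))) :=
  stmt16_general m J hJ T hT
end
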